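/- Let n ≥ 1, let Q be an n × n real matrix with nonnegative entries, let δ ∈ (0, 1] and 0 < m ≤ n be real numbers, and suppose that the ℓ²-operator norm satisfies ‖Q‖ ≤ 1 − δm/n and that for every natural number t and all indices s, x one has (Qᵗ)_{s,x} ≤ 1/n + (1−δ)ᵗ. Then for all natural numbers t, r and every index s: Σ_x (Q^{t+r})_{s,x} ≤ (1 − δm/n)^r + n(1−δ)^t. -/

import Mathlib

/-!
Write `c = 1 - δm/n` and `u = Qʳ 𝟙`, the vector of row sums of `Qʳ`. Iterating the norm bound gives
`‖u‖₂ ≤ cʳ ‖𝟙‖₂ = cʳ √n`, so by Cauchy–Schwarz the total mass `Σ_y u_y` is at most `n cʳ`. Splitting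
`Q^{t+r} 𝟙 = Qᵗ u` and bounding the entries of the `s`-th row of `Qᵗ` by `1/n + (1-δ)ᵗ` gives
`(1/n + (1-δ)ᵗ) n cʳ = cʳ + n (1-δ)ᵗ cʳ`, and `cʳ ≤ 1`.
-/

open Matrix Finset

section

variable {ι : Type*} [Fintype ι] [DecidableEq ι] {Q : Matrix ι ι ℝ} {c : ℝ}

lemma sqrt_sum_sq_pow_mulVec_le (hc : 0 ≤ c)
    (hQ : ∀ x : ι → ℝ, √(∑ i, (Q *ᵥ x) i ^ 2) ≤ c * √(∑ i, x i ^ 2)) (k : ℕ) (x : ι → ℝ) :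
    √(∑ i, (Q ^ k *ᵥ x) i ^ 2) ≤ c ^ k * √(∑ i, x i ^ 2) := by
  induction k generalizing x with
  | zero => simp
  | succ k ih =>
    calc √(∑ i, (Q ^ (k + 1) *ᵥ x) i ^ 2)
        = √(∑ i, (Q ^ k *ᵥ (Q *ᵥ x)) i ^ 2) := by rw [pow_succ, mulVec_mulVec]
      _ ≤ c ^ k * √(∑ i, (Q *ᵥ x) i ^ 2) := ih _
      _ ≤ c ^ k * (c * √(∑ i, x i ^ 2)) := by gcongr; exact hQ x
      _ = c ^ (k + 1) * √(∑ i, x i ^ 2) := by ring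

lemma sum_pow_mulVec_one_le (hc : 0 ≤ c)
    (hQ : ∀ x : ι → ℝ, √(∑ i, (Q *ᵥ x) i ^ 2) ≤ c * √(∑ i, x i ^ 2)) (k : ℕ) :
    ∑ i, (Q ^ k *ᵥ 1) i ≤ Fintype.card ι * c ^ k := by
  have hcard : √(∑ i : ι, (1 : ι → ℝ) i ^ 2) ^ 2 = Fintype.card ι := by simp
  calc ∑ i, (Q ^ k *ᵥ 1) i = ∑ i, (1 : ι → ℝ) i * (Q ^ k *ᵥ 1) i := by simp
    _ ≤ √(∑ i, (1 : ι → ℝ) i ^ 2) * √(∑ i, (Q ^ k *ᵥ 1) i ^ 2) :=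
      Real.sum_mul_le_sqrt_mul_sqrt _ _ _
    _ ≤ √(∑ i, (1 : ι → ℝ) i ^ 2) * (c ^ k * √(∑ i, (1 : ι → ℝ) i ^ 2)) := by
      gcongr; exact sqrt_sum_sq_pow_mulVec_le hc hQ k 1
    _ = Fintype.card ι * c ^ k := by rw [← hcard]; ring

end

lemma mulVec_apply_le_mul_sum {κ ι : Type*} [Fintype ι] {A : Matrix κ ι ℝ} {u : ι → ℝ} {a : ℝ}
    {s : κ} (hA : ∀ j, A s j ≤ a) (hu : ∀ j, 0 ≤ u j) : (A *ᵥ u) s ≤ a * ∑ j, u j := by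
  rw [mulVec, dotProduct, mul_sum]
  exact sum_le_sum fun j _ => mul_le_mul_of_nonneg_right (hA j) (hu j)

theorem stmt16 (n : ℕ) (Q : Matrix (Fin n) (Fin n) ℝ)
    (hQ0 : ∀ i j, 0 ≤ Q i j)
    (δ m : ℝ) (hδ0 : 0 < δ) (hδ1 : δ ≤ 1) (hm0 : 0 < m) (hmn : m ≤ n)
    (hnorm : ∀ x : Fin n → ℝ,
      Real.sqrt (∑ i, (Q.mulVec x) i ^ 2) ≤
        (1 - δ * m / n) * Real.sqrt (∑ i, x i ^ 2))
    (hent : ∀ (t : ℕ) (s x : Fin n), (Q ^ t) s x ≤ 1 / n + (1 - δ) ^ t) :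
    ∀ (t r : ℕ) (s : Fin n),
      ∑ x, (Q ^ (t + r)) s x ≤ (1 - δ * m / n) ^ r + n * (1 - δ) ^ t := by
  intro t r s
  have hn : (n : ℝ) ≠ 0 := by have := s.pos; positivity
  set c := 1 - δ * m / n
  have hc0 : 0 ≤ c := by
    have : δ * m ≤ n := by nlinarith
    rw [sub_nonneg]; exact div_le_one_of_le₀ this n.cast_nonneg
  have hc1 : c ≤ 1 := sub_le_self 1 (by positivity)
  set u := Q ^ r *ᵥ 1
  have hu : ∀ j, 0 ≤ u j := fun j => by
    simp only [u, mulVec, dotProduct, Pi.one_apply, mul_one]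
    exact sum_nonneg fun i _ => pow_apply_nonneg hQ0 r j i
  have hδt : 0 ≤ (1 - δ) ^ t := pow_nonneg (sub_nonneg.2 hδ1) t
  calc ∑ x, (Q ^ (t + r)) s x = (Q ^ t *ᵥ u) s := by
        rw [mulVec_mulVec, ← pow_add]; simp [mulVec, dotProduct]
    _ ≤ (1 / n + (1 - δ) ^ t) * ∑ j, u j := mulVec_apply_le_mul_sum (hent t s) hu
    _ ≤ (1 / n + (1 - δ) ^ t) * (n * c ^ r) :=
        mul_le_mul_of_nonneg_left (by simpa using sum_pow_mulVec_one_le hc0 hnorm r)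
          (by positivity)
    _ = c ^ r + n * (1 - δ) ^ t * c ^ r := by field_simp
    _ ≤ c ^ r + n * (1 - δ) ^ t := by
        have := mul_le_of_le_one_right (by positivity : 0 ≤ n * (1 - δ) ^ t)
          (pow_le_one₀ hc0 hc1 (n := r))
        linarith
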